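/- Let 𝒦 be a type (abstracting oriented Legendrian knots in the standard contact S³), let # : 𝒦 → 𝒦 → 𝒦 be a binary operation (abstracting connected sum), and let tb, r, τ : 𝒦 → ℤ be functions. Assume: (i) for all K₁ K₂, tb (K₁ # K₂) = tb K₁ + tb K₂ + 1; (ii) for all K₁ K₂, r (K₁ # K₂) = r K₁ + r K₂; (iii) for all K₁ K₂, τ (K₁ # K₂) = τ K₁ + τ K₂; (iv) for every K, tb K + r K is odd; (v) for every K, tb K + r K ≤ 2 * τ K + 1. Then for every K, tb K + r K ≤ 2 * τ K − 1. -/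

import Mathlib

theorem stmt_0 {𝒦 : Type*} (conn : 𝒦 → 𝒦 → 𝒦) (tb r τ : 𝒦 → ℤ)
    (htb : ∀ K₁ K₂, tb (conn K₁ K₂) = tb K₁ + tb K₂ + 1)
    (hr : ∀ K₁ K₂, r (conn K₁ K₂) = r K₁ + r K₂)
    (hτ : ∀ K₁ K₂, τ (conn K₁ K₂) = τ K₁ + τ K₂)
    (hodd : ∀ K, Odd (tb K + r K))
    (hbound : ∀ K, tb K + r K ≤ 2 * τ K + 1) :
    ∀ K, tb K + r K ≤ 2 * τ K - 1 := by
  intro K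
  have hself : tb K + r K ≤ 2 * τ K := by
    have h := hbound (conn K K)
    rw [htb, hr, hτ] at h
    linarith
  obtain ⟨m, hm⟩ := hodd K
  omega
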